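/- arXiv:1612.04885 — 6 statements merged into one kernel-verified Lean document; each statement's English description precedes it below -/
import Mathlib

section
/- Let m ≥ 1 be a natural number, let 0 ≤ μ₀ < μ₁ ≤ 1 be real numbers with update strength δ = μ₁ − μ₀, let n > 0 be a real number (the number of securities held), and let k ≥ 0. Then the inequality n·μ₀·(m−1)/m + (1−μ₀)·k·(μ₀+μ₁)/2 ≥ n·(μ₀·(m−1)/m + 1/m) + μ₀·k·(1−(μ₀+μ₁)/2) holds if and only if k ≥ 2n/(m·δ). (Lemma 1, case n_i > 0: truthfully reporting a negative signal is a best response for an arbiter holding n securities iff k ≥ 2|n|/(mδ).) -/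
/-- Lemma 1, case n > 0: truthfully reporting a negative signal is a best
response for an arbiter holding `n` securities iff `k ≥ 2n/(mδ)`. -/
theorem stmt_0 (m : ℕ) (hm : 1 ≤ m) (μ₀ μ₁ : ℝ) (hμ₀ : 0 ≤ μ₀) (hμ : μ₀ < μ₁)
    (hμ₁ : μ₁ ≤ 1) (δ : ℝ) (hδ : δ = μ₁ - μ₀) (n : ℝ) (hn : 0 < n)
    (k : ℝ) (hk : 0 ≤ k) :
    n * μ₀ * (m - 1) / m + (1 - μ₀) * k * ((μ₀ + μ₁) / 2) ≥
      n * (μ₀ * (m - 1) / m + 1 / m) + μ₀ * k * (1 - (μ₀ + μ₁) / 2) ↔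
    k ≥ 2 * n / (m * δ) := by
  have hm0 : (0:ℝ) < m := by exact_mod_cast hm
  have hmne : (m:ℝ) ≠ 0 := ne_of_gt hm0
  have hδ0 : 0 < δ := by rw [hδ]; linarith
  have key : n * μ₀ * (m - 1) / m + (1 - μ₀) * k * ((μ₀ + μ₁) / 2) -
      (n * (μ₀ * (m - 1) / m + 1 / m) + μ₀ * k * (1 - (μ₀ + μ₁) / 2)) =
      k * δ / 2 - n / m := by
    rw [hδ]; field_simp; ring
  have h2 : (n * μ₀ * (m - 1) / m + (1 - μ₀) * k * ((μ₀ + μ₁) / 2) ≥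
      n * (μ₀ * (m - 1) / m + 1 / m) + μ₀ * k * (1 - (μ₀ + μ₁) / 2)) ↔
      n / (m:ℝ) ≤ k * δ / 2 := by
    constructor <;> intro h <;> [linarith; linarith]
  rw [h2, div_le_iff₀ hm0, ge_iff_le, div_le_iff₀ (by positivity : (0:ℝ) < m * δ)]
  constructor <;> intro h <;> nlinarith
end

section
/- Let m ≥ 1 be a natural number, let 0 ≤ μ₀ < μ₁ ≤ 1 be real numbers with update strength δ = μ₁ − μ₀, let n < 0 be a real number (a short position of |n| securities), and let k ≥ 0. Then the inequality n·(μ₁·(m−1)/m + 1/m) + μ₁·k·(1−(μ₀+μ₁)/2) ≥ n·μ₁·(m−1)/m + (1−μ₁)·k·(μ₀+μ₁)/2 holds if and only if k ≥ 2·(−n)/(m·δ) = 2|n|/(m·δ). (Lemma 1, case n_i < 0: truthfully reporting a positive signal is a best response iff k ≥ 2|n|/(mδ).) -/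
/-- Lemma 1, case n < 0: truthfully reporting a positive signal is a best
response iff `k ≥ 2|n|/(mδ)`. -/
theorem stmt_1 (m : ℕ) (hm : 1 ≤ m) (μ₀ μ₁ : ℝ) (hμ₀ : 0 ≤ μ₀) (hμ : μ₀ < μ₁)
    (hμ₁ : μ₁ ≤ 1) (δ : ℝ) (hδ : δ = μ₁ - μ₀) (n : ℝ) (hn : n < 0)
    (k : ℝ) (hk : 0 ≤ k) :
    n * (μ₁ * (m - 1) / m + 1 / m) + μ₁ * k * (1 - (μ₀ + μ₁) / 2) ≥
      n * μ₁ * (m - 1) / m + (1 - μ₁) * k * ((μ₀ + μ₁) / 2) ↔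
    k ≥ 2 * (-n) / (m * δ) := by
  have hm0 : (0:ℝ) < m := by positivity
  have hδ0 : (0:ℝ) < δ := by rw [hδ]; linarith
  have hm' : (m:ℝ) ≠ 0 := ne_of_gt hm0
  have key : n * (μ₁ * ((m:ℝ) - 1) / m + 1 / m) + μ₁ * k * (1 - (μ₀ + μ₁) / 2)
      - (n * μ₁ * ((m:ℝ) - 1) / m + (1 - μ₁) * k * ((μ₀ + μ₁) / 2))
      = (2 * n + k * δ * m) / (2 * m) := by
    rw [hδ]; field_simp; ring
  rw [ge_iff_le, ← sub_nonneg, key, ge_iff_le, div_le_iff₀ (by positivity), le_div_iff₀ (by positivity)]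
  constructor <;> intro h <;> nlinarith [mul_pos hm0 hδ0]
end

section
/- Let C : ℝ → ℝ be a convex differentiable function, let f > 0, and let q' ≤ q be real numbers with the derivative satisfying C'(q) ≤ f/(1+f). Then (1+f)·(C(q) − C(q')) ≤ f·(q − q'). Consequently, an agent selling q − q' securities when the instantaneous price is at most f/(1+f) receives revenue C(q) − C(q') that does not exceed the trading fee f·((q−q') − (C(q)−C(q'))), i.e., the sale yields nonpositive net revenue. -/
/-- Sell-side half of Lemma 2: selling securities when the instantaneous price
is at most `f/(1+f)` yields nonpositive net revenue. -/
theorem stmt_4 (C : ℝ → ℝ) (hconv : ConvexOn ℝ Set.univ C)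
    (hdiff : Differentiable ℝ C) (f : ℝ) (hf : 0 < f) (q' q : ℝ) (hq : q' ≤ q)
    (hp : deriv C q ≤ f / (1 + f)) :
    (1 + f) * (C q - C q') ≤ f * (q - q') := by
  have h1f : (0:ℝ) < 1 + f := by linarith
  rcases eq_or_lt_of_le hq with rfl | hlt
  · simp
  · have hs := hconv.slope_le_of_hasDerivAt (Set.mem_univ q') (Set.mem_univ q) hlt
      (hdiff q).hasDerivAt
    rw [slope_def_field] at hs
    have hqq : (0:ℝ) < q - q' := by linarith
    have key : C q - C q' ≤ f / (1 + f) * (q - q') := by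
      calc C q - C q' = (C q - C q') / (q - q') * (q - q') := by field_simp
        _ ≤ f / (1 + f) * (q - q') := by
            apply mul_le_mul_of_nonneg_right _ hqq.le
            exact le_trans hs hp
    calc (1 + f) * (C q - C q') ≤ (1 + f) * (f / (1 + f) * (q - q')) :=
          mul_le_mul_of_nonneg_left key h1f.le
      _ = f * (q - q') := by field_simp
end

section
/- Let C : ℝ → ℝ be a convex differentiable function whose derivative satisfies 0 < C'(x) < 1 for all x, let B > 0, and let q₁ ≤ q₂ ≤ q⁺ be real numbers. Suppose q₁' ≤ q₁ and q₂' ≤ q₂ satisfy (q₁ − q₁') − (C(q₁) − C(q₁')) = B and (q₂ − q₂') − (C(q₂) − C(q₂')) = B. Then q₁ − q₁' ≤ q₂ − q₂'. In particular, the maximum number of securities an agent with budget B can short sell in a single transaction, when the outstanding quantity is at most q⁺, is attained when the transaction starts at q⁺. (Lower bound of Corollary 1.) -/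
/-- Lower bound of Corollary 1: for a fixed worst-case-loss budget `B`, the
number of securities short sold in a single transaction is maximized when
starting from the largest possible outstanding quantity. -/
theorem stmt_7 (C : ℝ → ℝ) (hconv : ConvexOn ℝ Set.univ C)
    (hdiff : Differentiable ℝ C) (hderiv : ∀ x, 0 < deriv C x ∧ deriv C x < 1)
    (B : ℝ) (hB : 0 < B) (q₁ q₂ qplus q₁' q₂' : ℝ)
    (h₁₂ : q₁ ≤ q₂) (h₂ : q₂ ≤ qplus) (h₁' : q₁' ≤ q₁) (h₂' : q₂' ≤ q₂)
    (hB₁ : (q₁ - q₁') - (C q₁ - C q₁') = B)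
    (hB₂ : (q₂ - q₂') - (C q₂ - C q₂') = B) :
    q₁ - q₁' ≤ q₂ - q₂' := by
  set ℓ₁ := q₁ - q₁' with hl1
  set ℓ₂ := q₂ - q₂' with hl2
  by_contra hlt
  push_neg at hlt
  have hmono : Monotone (deriv C) := by
    have := hconv.monotoneOn_deriv (fun x _ => hdiff.differentiableAt)
    intro a b hab
    exact this (Set.mem_univ a) (Set.mem_univ b) hab
  -- h(ℓ) = ℓ + C (q₂ - ℓ) is strictly monotone
  have hstrict : StrictMono (fun ℓ : ℝ => ℓ + C (q₂ - ℓ)) := by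
    apply strictMono_of_deriv_pos
    intro x
    have hd : HasDerivAt (fun ℓ : ℝ => ℓ + C (q₂ - ℓ))
        (1 + deriv C (q₂ - x) * (0 - 1)) x := by
      exact (hasDerivAt_id x).add (((hdiff (q₂ - x)).hasDerivAt).comp x
        ((hasDerivAt_const x q₂).sub (hasDerivAt_id x)))
    rw [hd.deriv]
    have := (hderiv (q₂ - x)).2
    linarith
  -- g(q) = C q - C (q - ℓ₁) is monotone since ℓ₁ ≥ 0
  have hl1nn : (0:ℝ) ≤ ℓ₁ := by simp [hl1]; linarith
  have hgmono : Monotone (fun q : ℝ => C q - C (q - ℓ₁)) := by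
    apply monotone_of_deriv_nonneg
    · exact hdiff.sub ((hdiff.comp (differentiable_id.sub (differentiable_const ℓ₁))))
    · intro x
      have hd : HasDerivAt (fun q : ℝ => C q - C (q - ℓ₁))
          (deriv C x - deriv C (x - ℓ₁) * (1 - 0)) x := by
        exact ((hdiff x).hasDerivAt).sub (((hdiff (x - ℓ₁)).hasDerivAt).comp x
          ((hasDerivAt_id x).sub (hasDerivAt_const x ℓ₁)))
      rw [hd.deriv]
      have := hmono (show x - ℓ₁ ≤ x by linarith)
      linarith
  have step1 : ℓ₂ + C (q₂ - ℓ₂) < ℓ₁ + C (q₂ - ℓ₁) := hstrict hlt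
  have step2 : C q₁ - C (q₁ - ℓ₁) ≤ C q₂ - C (q₂ - ℓ₁) := hgmono h₁₂
  have hq1 : q₁ - ℓ₁ = q₁' := by simp [hl1]
  have hq2 : q₂ - ℓ₂ = q₂' := by simp [hl2]
  rw [hq1] at step2
  rw [hq2] at step1
  linarith
end

section
/- Let C : ℝ → ℝ be a convex differentiable function, let f > 0 and B > 0, and let q'' ≤ q⁺ be real numbers with C'(q⁺) = 1/(1+f) and (q⁺ − q'') − (C(q⁺) − C(q'')) = B. Then q⁺ − q'' ≤ B·(1+f)/f. (An agent with worst-case-loss budget B short selling from the maximum outstanding quantity q⁺, where the price equals 1/(1+f), sells at most B(1+f)/f securities; this is the sell-side bound underlying Corollary 2.) -/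
/-- Sell-side bound underlying Corollary 2: an agent with worst-case-loss
budget `B` short selling from the maximum quantity `q⁺`, where the price is
`1/(1+f)`, sells at most `B(1+f)/f` securities. -/
theorem stmt_9 (C : ℝ → ℝ) (hconv : ConvexOn ℝ Set.univ C)
    (hdiff : Differentiable ℝ C) (f B : ℝ) (hf : 0 < f) (hB : 0 < B)
    (q'' qplus : ℝ) (hq : q'' ≤ qplus)
    (hp : deriv C qplus = 1 / (1 + f))
    (hloss : (qplus - q'') - (C qplus - C q'') = B) :
    qplus - q'' ≤ B * (1 + f) / f := by
  have hf1 : 0 < 1 + f := by linarith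
  rcases eq_or_lt_of_le hq with h | h
  · subst h
    have : (0:ℝ) ≤ B * (1 + f) / f := by positivity
    linarith
  · have hslope : slope C q'' qplus ≤ deriv C qplus :=
      hconv.slope_le_deriv (Set.mem_univ _) (Set.mem_univ _) h (hdiff qplus)
    rw [slope_def_field, div_le_iff₀ (by linarith), hp,
      div_mul_eq_mul_div, le_div_iff₀ hf1] at hslope
    rw [le_div_iff₀ hf]
    nlinarith
end

section
/- Let m ≥ 1 be a natural number, let 0 ≤ μ₀ < μ₁ ≤ 1 with δ = μ₁ − μ₀, let f > 0 and B > 0, and let n be a real number with |n| ≤ B·(1+f)/f. If k ≥ 2·B·(1+f)/(f·m·δ), then both truthful-reporting inequalities hold: n·μ₀·(m−1)/m + (1−μ₀)·k·(μ₀+μ₁)/2 ≥ n·(μ₀·(m−1)/m + 1/m) + μ₀·k·(1−(μ₀+μ₁)/2), and n·(μ₁·(m−1)/m + 1/m) + μ₁·k·(1−(μ₀+μ₁)/2) ≥ n·μ₁·(m−1)/m + (1−μ₁)·k·(μ₀+μ₁)/2. (Theorem 1, multiple-entry case: with the security position bounded by B(1+f)/f, scaling k ≥ 2B(1+f)/(fmδ)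 makes truthful reporting a best response for every arbiter.) -/
/-!
Each arbiter's gain from reporting truthfully, instead of flipping its report, is
`(k δ m ∓ 2 n) / (2 m)`: the peer-prediction payment contributes `k δ / 2` and the
arbiter's own vote moves the value of its `n` securities by `n / m`. The scaling
condition on `k` gives `k δ m ≥ 2 B (1 + f) / f ≥ 2 |n|`.
-/

section TruthfulGain

variable {m μ₀ μ₁ n k : ℝ}

lemma truthful_gain_signal_zero (hm : m ≠ 0) :
    n * μ₀ * (m - 1) / m + (1 - μ₀) * k * ((μ₀ + μ₁) / 2) -
      (n * (μ₀ * (m - 1) / m + 1 / m) + μ₀ * k * (1 - (μ₀ + μ₁) / 2)) =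
      (k * (μ₁ - μ₀) * m - 2 * n) / (2 * m) := by
  field_simp
  ring

lemma truthful_gain_signal_one (hm : m ≠ 0) :
    n * (μ₁ * (m - 1) / m + 1 / m) + μ₁ * k * (1 - (μ₀ + μ₁) / 2) -
      (n * μ₁ * (m - 1) / m + (1 - μ₁) * k * ((μ₀ + μ₁) / 2)) =
      (k * (μ₁ - μ₀) * m + 2 * n) / (2 * m) := by
  field_simp
  ring

lemma truthful_of_two_mul_abs_le (hm : 0 < m) (hn : 2 * |n| ≤ k * (μ₁ - μ₀) * m) :
    n * μ₀ * (m - 1) / m + (1 - μ₀) * k * ((μ₀ + μ₁) / 2) ≥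
      n * (μ₀ * (m - 1) / m + 1 / m) + μ₀ * k * (1 - (μ₀ + μ₁) / 2) ∧
    n * (μ₁ * (m - 1) / m + 1 / m) + μ₁ * k * (1 - (μ₀ + μ₁) / 2) ≥
      n * μ₁ * (m - 1) / m + (1 - μ₁) * k * ((μ₀ + μ₁) / 2) := by
  have hn_lower := neg_abs_le n
  have hn_upper := le_abs_self n
  constructor
  · rw [ge_iff_le, ← sub_nonneg, truthful_gain_signal_zero hm.ne']
    exact div_nonneg (by linarith) (by positivity)
  · rw [ge_iff_le, ← sub_nonneg, truthful_gain_signal_one hm.ne']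
    exact div_nonneg (by linarith) (by positivity)

end TruthfulGain

lemma two_mul_abs_le_of_scaling {m δ n k C : ℝ} (hmδ : 0 < m * δ) (hn : |n| ≤ C)
    (hk : k ≥ 2 * C / (m * δ)) : 2 * |n| ≤ k * δ * m := by
  have := (div_le_iff₀ hmδ).mp hk
  linarith

theorem stmt_10_general (m : ℕ) (hm : 1 ≤ m) (μ₀ μ₁ : ℝ) (hμ : μ₀ < μ₁)
    (δ : ℝ) (hδ : δ = μ₁ - μ₀) (f B : ℝ)
    (n : ℝ) (hn : |n| ≤ B * (1 + f) / f)
    (k : ℝ) (hk : k ≥ 2 * B * (1 + f) / (f * m * δ)) :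
    n * μ₀ * (m - 1) / m + (1 - μ₀) * k * ((μ₀ + μ₁) / 2) ≥
      n * (μ₀ * (m - 1) / m + 1 / m) + μ₀ * k * (1 - (μ₀ + μ₁) / 2) ∧
    n * (μ₁ * (m - 1) / m + 1 / m) + μ₁ * k * (1 - (μ₀ + μ₁) / 2) ≥
      n * μ₁ * (m - 1) / m + (1 - μ₁) * k * ((μ₀ + μ₁) / 2) := by
  have hm_pos : (0 : ℝ) < m := by exact_mod_cast hm
  have hδ_pos : 0 < δ := by rw [hδ]; linarith
  have hk' : k ≥ 2 * (B * (1 + f) / f) / (m * δ) := by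
    convert hk using 1
    ring
  apply truthful_of_two_mul_abs_le hm_pos
  subst hδ
  exact two_mul_abs_le_of_scaling (by positivity) hn hk'

/-- Theorem 1, multiple-entry case: with the security position bounded by
`B(1+f)/f`, scaling `k ≥ 2B(1+f)/(fmδ)` makes truthful reporting a best
response for every arbiter. -/
theorem stmt_10 (m : ℕ) (hm : 1 ≤ m) (μ₀ μ₁ : ℝ) (hμ₀ : 0 ≤ μ₀) (hμ : μ₀ < μ₁)
    (hμ₁ : μ₁ ≤ 1) (δ : ℝ) (hδ : δ = μ₁ - μ₀) (f B : ℝ) (hf : 0 < f)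
    (hB : 0 < B) (n : ℝ) (hn : |n| ≤ B * (1 + f) / f)
    (k : ℝ) (hk : k ≥ 2 * B * (1 + f) / (f * m * δ)) :
    n * μ₀ * (m - 1) / m + (1 - μ₀) * k * ((μ₀ + μ₁) / 2) ≥
      n * (μ₀ * (m - 1) / m + 1 / m) + μ₀ * k * (1 - (μ₀ + μ₁) / 2) ∧
    n * (μ₁ * (m - 1) / m + 1 / m) + μ₁ * k * (1 - (μ₀ + μ₁) / 2) ≥
      n * μ₁ * (m - 1) / m + (1 - μ₁) * k * ((μ₀ + μ₁) / 2) :=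
  stmt_10_general m hm μ₀ μ₁ hμ δ hδ f B n hn k hk
end
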